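/- If F is Schur stable and x̃_t = F^t x̃_0 + Σ_{k=0}^{t−1} F^{t−1−k} w_k with w_k ∈ W for a fixed bounded set W, then the distance from x̃_t to the set W_∞ := closure of {Σ_{k=0}^{∞} F^k v_k : v_k ∈ W} converges to 0 exponentially, i.e., dist(x̃_t, W_∞) ≤ c ρ^t ‖x̃_0‖ for some c > 0 and ρ ∈ (0,1). -/

import Mathlib

/-!
Reversing the order of the disturbances, the forced response
`∑_{k<t} F^{t-1-k} w_k` equals `∑_k F^k v_k` for the sequence `v = (w_{t-1}, …, w_0, 0, 0, …)`,
which takes values in `W` because `0 ∈ W`. So the forced response lies in `W_∞`, and the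
distance of `x̃_t` to `W_∞` is at most the norm of the free response `F^t x̃_0`.
-/

open Finset

variable {ι R : Type*} [Fintype ι] [DecidableEq ι] [Semiring R] [TopologicalSpace R]

/-- The paper's `W_∞` is the closure of this set. -/
def Matrix.disturbanceSeriesSet (F : Matrix ι ι R) (W : Set (ι → R)) : Set (ι → R) :=
  {y | ∃ v : ℕ → (ι → R), (∀ k, v k ∈ W) ∧ HasSum (fun k => (F ^ k).mulVec (v k)) y}

theorem Matrix.sum_range_pow_sub_mulVec_mem_disturbanceSeriesSet (F : Matrix ι ι R)
    {W : Set (ι → R)} (h0W : 0 ∈ W) {w : ℕ → ι → R} (hw : ∀ k, w k ∈ W) (t : ℕ) :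
    ∑ k ∈ range t, (F ^ (t - 1 - k)).mulVec (w k) ∈ F.disturbanceSeriesSet W := by
  let v : ℕ → ι → R := fun k => if k < t then w (t - 1 - k) else 0
  have hv : ∀ k, v k ∈ W := fun k => by
    by_cases hk : k < t <;> simp [v, hk, hw, h0W]
  refine ⟨v, hv, ?_⟩
  have hsum : HasSum (fun k => (F ^ k).mulVec (v k))
      (∑ k ∈ range t, (F ^ k).mulVec (v k)) :=
    hasSum_sum_of_ne_finset_zero fun k hk => by
      simp [v, show ¬k < t by simpa using hk]
  convert hsum using 1
  rw [← sum_range_reflect]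
  refine sum_congr rfl fun k hk => ?_
  have hk : k < t := mem_range.mp hk
  simp [v, hk, show t - 1 - (t - 1 - k) = k by omega]

theorem stmt_8_general {n : ℕ} (F : Matrix (Fin n) (Fin n) ℝ) (W : Set (Fin n → ℝ))
    (c₀ ρ : ℝ) (hc₀ : 1 ≤ c₀) (hρ : ρ ∈ Set.Ioo (0 : ℝ) 1)
    (hF : ∀ (k : ℕ) (v : Fin n → ℝ), ‖(F ^ k).mulVec v‖ ≤ c₀ * ρ ^ k * ‖v‖)
    (h0W : (0 : Fin n → ℝ) ∈ W)
    (x0 : Fin n → ℝ) (w : ℕ → (Fin n → ℝ)) (hw : ∀ k, w k ∈ W)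
    (x : ℕ → (Fin n → ℝ))
    (hx : ∀ t : ℕ, x t =
      (F ^ t).mulVec x0 + ∑ k ∈ Finset.range t, (F ^ (t - 1 - k)).mulVec (w k)) :
    ∃ c > (0 : ℝ), ∃ r ∈ Set.Ioo (0 : ℝ) 1, ∀ t : ℕ,
      Metric.infDist (x t)
        (closure {y : Fin n → ℝ | ∃ v : ℕ → (Fin n → ℝ), (∀ k, v k ∈ W) ∧
          HasSum (fun k => (F ^ k).mulVec (v k)) y})
        ≤ c * r ^ t * ‖x0‖ := by
  refine ⟨c₀, by linarith, ρ, hρ, fun t => ?_⟩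
  have hforced := F.sum_range_pow_sub_mulVec_mem_disturbanceSeriesSet h0W hw t
  calc Metric.infDist (x t) (closure (F.disturbanceSeriesSet W))
      ≤ dist (x t) (∑ k ∈ range t, (F ^ (t - 1 - k)).mulVec (w k)) :=
        Metric.infDist_le_dist_of_mem (subset_closure hforced)
    _ = ‖(F ^ t).mulVec x0‖ := by rw [dist_eq_norm, hx t, add_sub_cancel_right]
    _ ≤ c₀ * ρ ^ t * ‖x0‖ := hF t x0

/-- For Schur stable `F` and `x̃_t = F^t x̃_0 + ∑_{k<t} F^{t-1-k} w_k` with `w_k ∈ W`,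
the distance of `x̃_t` to `W_∞ := closure {∑_k F^k v_k : v_k ∈ W}` converges to `0`
exponentially: `dist(x̃_t, W_∞) ≤ c ρ^t ‖x̃_0‖`. -/
theorem stmt_8 {n : ℕ} (F : Matrix (Fin n) (Fin n) ℝ) (W : Set (Fin n → ℝ))
    (c₀ ρ : ℝ) (hc₀ : 1 ≤ c₀) (hρ : ρ ∈ Set.Ioo (0 : ℝ) 1)
    (hF : ∀ (k : ℕ) (v : Fin n → ℝ), ‖(F ^ k).mulVec v‖ ≤ c₀ * ρ ^ k * ‖v‖)
    (hW : Bornology.IsBounded W) (h0W : (0 : Fin n → ℝ) ∈ W)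
    (x0 : Fin n → ℝ) (w : ℕ → (Fin n → ℝ)) (hw : ∀ k, w k ∈ W)
    (x : ℕ → (Fin n → ℝ))
    (hx : ∀ t : ℕ, x t =
      (F ^ t).mulVec x0 + ∑ k ∈ Finset.range t, (F ^ (t - 1 - k)).mulVec (w k)) :
    ∃ c > (0 : ℝ), ∃ r ∈ Set.Ioo (0 : ℝ) 1, ∀ t : ℕ,
      Metric.infDist (x t)
        (closure {y : Fin n → ℝ | ∃ v : ℕ → (Fin n → ℝ), (∀ k, v k ∈ W) ∧
          HasSum (fun k => (F ^ k).mulVec (v k)) y})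
        ≤ c * r ^ t * ‖x0‖ :=
  stmt_8_general F W c₀ ρ hc₀ hρ hF h0W x0 w hw x hx
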